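/- The graph G₀ is a minor of the complete bipartite graph K_{8,8}; however, every bipartite assignment (A1, A2) of G₀ into K_{8,8} satisfies |A1 ∩ A2| ≥ 2. In particular, no embedding of G₀ into K_{8,8} assigns only the vertices of a minimum-size odd cycle transversal of G₀ (which has size 1) to both parts. -/

import Mathlib

/-!
Every edge of `G₀` has an endpoint among `v1, v2, v3`, so replacing each of these three vertices
by an edge `inl k — inr k` of `K_{8,8}`, and every other vertex by a single vertex, gives a
minor model.

Conversely, in a bipartite assignment each triangle `v1 v2 a` has a vertex in `A1 ∩ A2`. If
`A1 ∩ A2` had at most one element, it would be `{c}` with `c ∈ {v1, v2}`; the other vertex `w`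
of `{v1, v2}` then lies on one side only, which forces `V_A` to the opposite side only, then
`v3` to the side of `w` only, then `V_B` to the opposite side. That side then contains every
vertex except `w` and `v3`, i.e. `9 > 8` vertices.
-/

/-- A minor model of `G` in `H`: a family of pairwise disjoint nonempty branch sets,
each inducing a connected subgraph of `H`, with an edge of `H` joining the branch sets
of any two adjacent vertices of `G`. -/
structure MinorModel {V W : Type*} (G : SimpleGraph V) (H : SimpleGraph W) where
  B : V → Set W
  nonempty : ∀ v, (B v).Nonempty
  pairwiseDisjoint : ∀ ⦃u v : V⦄, u ≠ v → Disjoint (B u) (B v)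
  connected : ∀ v, (H.induce (B v)).Connected
  edge : ∀ ⦃u v : V⦄, G.Adj u v → ∃ x ∈ B u, ∃ y ∈ B v, H.Adj x y

/-- `G` is a minor of `H`. -/
def SimpleGraph.IsMinorOf {V W : Type*} (G : SimpleGraph V) (H : SimpleGraph W) : Prop :=
  Nonempty (MinorModel G H)

/-- A bipartite assignment of `G` into the complete bipartite graph `K_{m1,m2}`. -/
def SimpleGraph.BipartiteAssignment {V : Type*} (G : SimpleGraph V) (m1 m2 : ℕ)
    (A1 A2 : Set V) : Prop :=
  A1 ∪ A2 = Set.univ ∧ A1.ncard ≤ m1 ∧ A2.ncard ≤ m2 ∧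
    ∀ ⦃u v : V⦄, G.Adj u v → (u ∈ A1 ∧ v ∈ A2) ∨ (u ∈ A2 ∧ v ∈ A1)

/-- `G − S` is bipartite, i.e. `S` is an odd cycle transversal of `G`. -/
def SimpleGraph.DelBipartite {V : Type*} (G : SimpleGraph V) (S : Set V) : Prop :=
  ∃ X Y : Set V, Disjoint X Y ∧ X ∪ Y = Sᶜ ∧
    ∀ ⦃u v : V⦄, G.Adj u v → u ∉ S → v ∉ S → (u ∈ X ∧ v ∈ Y) ∨ (u ∈ Y ∧ v ∈ X)

/-- The vertex set of the example graph `G₀`. -/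
inductive V0 : Type
  | v1 | v2 | v3 | a1 | a2 | a3 | a4 | b1 | b2 | b3 | b4
deriving DecidableEq

instance instFintypeV0 : Fintype V0 where
  elems := {V0.v1, V0.v2, V0.v3, V0.a1, V0.a2, V0.a3, V0.a4, V0.b1, V0.b2, V0.b3, V0.b4}
  complete := by intro x; cases x <;> decide

/-- The set `V_A = {a1, a2, a3, a4}`. -/
def VA : Set V0 := {V0.a1, V0.a2, V0.a3, V0.a4}

/-- The set `V_B = {b1, b2, b3, b4}`. -/
def VB : Set V0 := {V0.b1, V0.b2, V0.b3, V0.b4}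

/-- The example graph `G₀`: edges are `{v1,v2}`, `{v1,a}` and `{v2,a}` and `{v3,a}` for
all `a ∈ V_A`, and `{v3,b}` for all `b ∈ V_B`. -/
def G0 : SimpleGraph V0 :=
  SimpleGraph.fromRel fun x y =>
    (x = V0.v1 ∧ y = V0.v2) ∨ (x = V0.v1 ∧ y ∈ VA) ∨ (x = V0.v2 ∧ y ∈ VA) ∨
      (x = V0.v3 ∧ y ∈ VA) ∨ (x = V0.v3 ∧ y ∈ VB)

open SimpleGraph

lemma exists_completeBipartiteGraph_adj_of_inl_mem_of_inr_mem {α β : Type*}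
    {s t : Set (α ⊕ β)} {i : α} {j : β} (hi : .inl i ∈ s) (hj : .inr j ∈ s)
    (ht : t.Nonempty) :
    ∃ x ∈ s, ∃ y ∈ t, (completeBipartiteGraph α β).Adj x y := by
  obtain ⟨y | y, hy⟩ := ht
  · exact ⟨_, hj, _, hy, by simp⟩
  · exact ⟨_, hi, _, hy, by simp⟩

namespace SimpleGraph.BipartiteAssignment
variable {V : Type*} {G : SimpleGraph V} {m1 m2 : ℕ} {A1 A2 : Set V} {u v w : V}

lemma symm (h : G.BipartiteAssignment m1 m2 A1 A2) : G.BipartiteAssignment m2 m1 A2 A1 := by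
  obtain ⟨hcover, h1, h2, hadj⟩ := h
  exact ⟨Set.union_comm A1 A2 ▸ hcover, h2, h1, fun u v huv => (hadj huv).symm⟩

lemma mem_right_of_adj (h : G.BipartiteAssignment m1 m2 A1 A2) (huv : G.Adj u v) (hu : u ∉ A2) :
    v ∈ A2 :=
  ((h.2.2.2 huv).resolve_right fun huv' => hu huv'.1).2

lemma mem_left_of_adj (h : G.BipartiteAssignment m1 m2 A1 A2) (huv : G.Adj u v) (hu : u ∉ A1) :
    v ∈ A1 :=
  h.symm.mem_right_of_adj huv hu

lemma mem_inter_of_triangle (h : G.BipartiteAssignment m1 m2 A1 A2)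
    (huv : G.Adj u v) (hvw : G.Adj v w) (huw : G.Adj u w) :
    u ∈ A1 ∩ A2 ∨ v ∈ A1 ∩ A2 ∨ w ∈ A1 ∩ A2 := by
  by_contra! ⟨hu, hv, hw⟩
  rcases h.2.2.2 huv with ⟨hu1, hv2⟩ | ⟨hu2, hv1⟩
  · exact hw ⟨h.mem_left_of_adj hvw fun hv1 => hv ⟨hv1, hv2⟩,
      h.mem_right_of_adj huw fun hu2 => hu ⟨hu1, hu2⟩⟩
  · exact hw ⟨h.mem_left_of_adj huw fun hu1 => hu ⟨hu1, hu2⟩,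
      h.mem_right_of_adj hvw fun hv2 => hv ⟨hv1, hv2⟩⟩

end SimpleGraph.BipartiteAssignment

namespace G0

open V0

lemma isIndepSet_VA_union_VB : G0.IsIndepSet (VA ∪ VB) := by
  rintro x hx y hy - ⟨-, hxy⟩
  simp only [VA, VB, Set.mem_union, Set.mem_insert_iff, Set.mem_singleton_iff] at hx hy hxy
  rcases hx with (rfl | rfl | rfl | rfl) | (rfl | rfl | rfl | rfl) <;>
    rcases hy with (rfl | rfl | rfl | rfl) | (rfl | rfl | rfl | rfl) <;> simp at hxy

lemma mem_VA_union_VB_of_ne {x : V0} (h1 : x ≠ v1) (h2 : x ≠ v2) (h3 : x ≠ v3) :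
    x ∈ VA ∪ VB := by
  cases x <;> simp_all [VA, VB]

lemma adj_v1_v2 : G0.Adj v1 v2 := by simp [G0]

lemma adj_v1_of_mem_VA {a : V0} (ha : a ∈ VA) : G0.Adj v1 a := by
  rcases ha with rfl | rfl | rfl | rfl <;> simp [G0, VA]

lemma adj_v2_of_mem_VA {a : V0} (ha : a ∈ VA) : G0.Adj v2 a := by
  rcases ha with rfl | rfl | rfl | rfl <;> simp [G0, VA]

lemma adj_v3_of_mem_VA {a : V0} (ha : a ∈ VA) : G0.Adj v3 a := by
  rcases ha with rfl | rfl | rfl | rfl <;> simp [G0, VA]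

lemma adj_v3_of_mem_VB {b : V0} (hb : b ∈ VB) : G0.Adj v3 b := by
  rcases hb with rfl | rfl | rfl | rfl <;> simp [G0, VB]

def branchSet : V0 → Finset (Fin 8 ⊕ Fin 8)
  | v1 => {.inl 0, .inr 0}
  | v2 => {.inl 1, .inr 1}
  | v3 => {.inl 2, .inr 2}
  | a1 => {.inl 3}
  | a2 => {.inl 4}
  | a3 => {.inl 5}
  | a4 => {.inl 6}
  | b1 => {.inr 3}
  | b2 => {.inr 4}
  | b3 => {.inr 5}
  | b4 => {.inr 6}

lemma exists_inl_mem_inr_mem_branchSet {u : V0} (hu : u ∉ VA ∪ VB) :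
    ∃ i j, .inl i ∈ branchSet u ∧ .inr j ∈ branchSet u := by
  cases u <;> simp_all [VA, VB, branchSet]

lemma exists_adj_branchSet {u : V0} (hu : u ∉ VA ∪ VB) (v : V0) :
    ∃ x ∈ (branchSet u : Set (Fin 8 ⊕ Fin 8)), ∃ y ∈ (branchSet v : Set (Fin 8 ⊕ Fin 8)),
      (completeBipartiteGraph (Fin 8) (Fin 8)).Adj x y := by
  obtain ⟨i, j, hi, hj⟩ := exists_inl_mem_inr_mem_branchSet hu
  exact exists_completeBipartiteGraph_adj_of_inl_mem_of_inr_mem (Finset.mem_coe.mpr hi)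
    (Finset.mem_coe.mpr hj) (by cases v <;> simp [branchSet])

lemma induce_branchSet_connected (v : V0) :
    ((completeBipartiteGraph (Fin 8) (Fin 8)).induce
      (branchSet v : Set (Fin 8 ⊕ Fin 8))).Connected := by
  cases v <;> rw [branchSet]
  all_goals first
    | rw [Finset.coe_pair]; exact induce_pair_connected_of_adj (by simp)
    | rw [Finset.coe_singleton, induce_singleton_eq_top]; exact connected_top

def minorModel : MinorModel G0 (completeBipartiteGraph (Fin 8) (Fin 8)) where
  B v := branchSet v
  nonempty v := by cases v <;> simp [branchSet]
  pairwiseDisjoint u v huv := Finset.disjoint_coe.mpr (by revert u v; decide)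
  connected := induce_branchSet_connected
  edge u v huv := by
    by_cases hu : u ∈ VA ∪ VB
    · have hv : v ∉ VA ∪ VB := fun hv => isIndepSet_VA_union_VB hu hv huv.ne huv
      obtain ⟨y, hy, x, hx, hyx⟩ := exists_adj_branchSet hv u
      exact ⟨x, hx, y, hy, hyx.symm⟩
    · exact exists_adj_branchSet hu v

variable {m1 m2 : ℕ} {A1 A2 : Set V0}

lemma v1_mem_inter_or_v2_mem_inter (h : G0.BipartiteAssignment m1 m2 A1 A2)
    (hI : (A1 ∩ A2).Subsingleton) : v1 ∈ A1 ∩ A2 ∨ v2 ∈ A1 ∩ A2 := by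
  have ha1 := h.mem_inter_of_triangle adj_v1_v2 (adj_v2_of_mem_VA (a := a1) (by simp [VA]))
    (adj_v1_of_mem_VA (by simp [VA]))
  have ha2 := h.mem_inter_of_triangle adj_v1_v2 (adj_v2_of_mem_VA (a := a2) (by simp [VA]))
    (adj_v1_of_mem_VA (by simp [VA]))
  refine ha1.imp_right fun ha1 => ha1.resolve_right fun ha1 => ?_
  rcases ha2 with ha2 | ha2 | ha2 <;> simpa using hI ha1 ha2

lemma nine_le_ncard_of_mem_inter (h : G0.BipartiteAssignment m1 m2 A1 A2)
    (hI : (A1 ∩ A2).Subsingleton) {c w : V0} (hcw : c = v1 ∧ w = v2 ∨ c = v2 ∧ w = v1)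
    (hc : c ∈ A1 ∩ A2) (hw : w ∉ A2) : 9 ≤ A2.ncard := by
  have hwA : ∀ a ∈ VA, G0.Adj w a := by
    rcases hcw with ⟨-, rfl⟩ | ⟨-, rfl⟩
    exacts [fun a => adj_v2_of_mem_VA, fun a => adj_v1_of_mem_VA]
  have hcVA : c ∉ VA := by rcases hcw with ⟨rfl, -⟩ | ⟨rfl, -⟩ <;> simp [VA]
  have hcv3 : c ≠ v3 := by rcases hcw with ⟨rfl, -⟩ | ⟨rfl, -⟩ <;> simp
  have hwv3 : w ≠ v3 := by rcases hcw with ⟨-, rfl⟩ | ⟨-, rfl⟩ <;> simp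
  have hVA2 : ∀ a ∈ VA, a ∈ A2 := fun a ha => h.mem_right_of_adj (hwA a ha) hw
  have hVA1 : ∀ a ∈ VA, a ∉ A1 := fun a ha ha1 => hcVA (hI ⟨ha1, hVA2 a ha⟩ hc ▸ ha)
  have hv3A1 : v3 ∈ A1 := h.mem_left_of_adj (adj_v3_of_mem_VA (a := a1) (by simp [VA])).symm
    (hVA1 a1 (by simp [VA]))
  have hv3A2 : v3 ∉ A2 := fun hv3A2 => hcv3 (hI hc ⟨hv3A1, hv3A2⟩)
  have hVB2 : ∀ b ∈ VB, b ∈ A2 := fun b hb => h.mem_right_of_adj (adj_v3_of_mem_VB hb) hv3A2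
  have hsub : ({w, v3}ᶜ : Set V0) ⊆ A2 := by
    intro x hx
    simp only [Set.mem_compl_iff, Set.mem_insert_iff, Set.mem_singleton_iff, not_or] at hx
    by_cases hxc : x = c
    · exact hxc ▸ hc.2
    · have hx12 : x ≠ v1 ∧ x ≠ v2 := by rcases hcw with ⟨rfl, rfl⟩ | ⟨rfl, rfl⟩ <;> tauto
      rcases mem_VA_union_VB_of_ne hx12.1 hx12.2 hx.2 with hxA | hxB
      exacts [hVA2 x hxA, hVB2 x hxB]
  calc 9 = ({w, v3}ᶜ : Set V0).ncard := by
        rw [Set.ncard_compl, Set.ncard_pair hwv3, Nat.card_eq_fintype_card]; rfl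
    _ ≤ A2.ncard := Set.ncard_le_ncard hsub

theorem two_le_ncard_inter (h : G0.BipartiteAssignment 8 8 A1 A2) : 2 ≤ (A1 ∩ A2).ncard := by
  by_contra! hlt
  have hI : (A1 ∩ A2).Subsingleton := Set.ncard_le_one_iff_subsingleton.mp (by omega)
  obtain ⟨c, w, hcw, hc, hw⟩ : ∃ c w, (c = v1 ∧ w = v2 ∨ c = v2 ∧ w = v1) ∧
      c ∈ A1 ∩ A2 ∧ w ∉ A1 ∩ A2 := by
    rcases v1_mem_inter_or_v2_mem_inter h hI with hv | hv
    · exact ⟨v1, v2, .inl ⟨rfl, rfl⟩, hv, fun hw => by simpa using hI hv hw⟩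
    · exact ⟨v2, v1, .inr ⟨rfl, rfl⟩, hv, fun hw => by simpa using hI hv hw⟩
  have h9 : 9 ≤ A1.ncard ∨ 9 ≤ A2.ncard := by
    rcases not_and_or.mp hw with hw | hw
    · exact .inl <| nine_le_ncard_of_mem_inter h.symm (Set.inter_comm A1 A2 ▸ hI) hcw
        ⟨hc.2, hc.1⟩ hw
    · exact .inr <| nine_le_ncard_of_mem_inter h hI hcw hc hw
  obtain ⟨-, h1, h2, -⟩ := h
  omega

end G0

/-- `G₀` is a minor of `K_{8,8}`, but every bipartite assignment `(A1, A2)`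
of `G₀` into `K_{8,8}` satisfies `|A1 ∩ A2| ≥ 2`; in particular, no embedding of `G₀`
into `K_{8,8}` assigns only the vertices of a minimum-size odd cycle transversal of `G₀`
(which has size 1) to both parts. -/
theorem stmt11 :
    G0.IsMinorOf (completeBipartiteGraph (Fin 8) (Fin 8)) ∧
    (∀ A1 A2 : Set V0, G0.BipartiteAssignment 8 8 A1 A2 → 2 ≤ (A1 ∩ A2).ncard) ∧
    (∀ S : Set V0, G0.DelBipartite S → S.ncard = 1 →
      ∀ A1 A2 : Set V0, G0.BipartiteAssignment 8 8 A1 A2 → A1 ∩ A2 ≠ S) := by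
  refine ⟨⟨G0.minorModel⟩, fun A1 A2 => G0.two_le_ncard_inter, ?_⟩
  rintro S - hS A1 A2 h rfl
  have := G0.two_le_ncard_inter h
  omega
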